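/- Let g ∈ ℝⁿ \ {0}, let H be a symmetric n×n real matrix, and let ρ: ℝ → [0,∞] be a proper closed convex function with ρ(0) = 0 satisfying Assumptions 1–3. For t ∈ ℝ, let λ(t) be the smallest eigenvalue of B(t) := [[t, gᵀ],[g, H]], and define k̂(t) := inf_{γ ≥ 0} { ρ(γ − 1) + γλ(t) }. Then k̂: ℝ → ℝ is finite-valued, concave, and continuous. -/

import Mathlib

open Matrix Filter Set Topology

noncomputable section

/-- The quadratic part `2 gᵀ x + xᵀ H x` of the objective. -/
def quadObj {n : ℕ} (g : Fin n → ℝ) (H : Matrix (Fin n) (Fin n) ℝ) (x : Fin n → ℝ) : ℝ :=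
  2 * (g ⬝ᵥ x) + x ⬝ᵥ H.mulVec x

/-- The squared Euclidean norm `‖x‖²`. -/
def nsq {m : Type*} [Fintype m] (x : m → ℝ) : ℝ := x ⬝ᵥ x

/-- The Euclidean norm `‖x‖`. -/
def vnorm {m : Type*} [Fintype m] (x : m → ℝ) : ℝ := Real.sqrt (x ⬝ᵥ x)

/-- `ρ : ℝ → [0,∞]` is proper closed (lsc) convex with `ρ 0 = 0`. -/
def RhoBasic (ρ : ℝ → EReal) : Prop :=
  (∀ t, 0 ≤ ρ t) ∧ ρ 0 = 0 ∧ LowerSemicontinuous ρ ∧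
    ∀ a b θ : ℝ, 0 ≤ θ → θ ≤ 1 →
      ρ (θ * a + (1 - θ) * b) ≤ (θ : EReal) * ρ a + ((1 - θ : ℝ) : EReal) * ρ b

/-- Assumption 1: `ρ` is nondecreasing, vanishes on `(-∞,0]`, finite somewhere on `(0,∞)`. -/
def Assump1 (ρ : ℝ → EReal) : Prop :=
  Monotone ρ ∧ (∀ t ≤ (0:ℝ), ρ t = 0) ∧ ∃ t₀ : ℝ, 0 < t₀ ∧ ρ t₀ < ⊤

/-- Assumption 2: supercoercivity, `lim_{t→∞} ρ(t)/t = ∞`. -/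
def Assump2 (ρ : ℝ → EReal) : Prop :=
  ∀ M : ℝ, ∀ᶠ t : ℝ in atTop, ((M * t : ℝ) : EReal) ≤ ρ t

/-- The monotone conjugate `ρ⁺(u) = sup_{t ≥ 0} (ut − ρ(t))`. -/
def mconj (ρ : ℝ → EReal) (u : ℝ) : EReal :=
  ⨆ t : {t : ℝ // 0 ≤ t}, (((u * (t : ℝ) : ℝ) : EReal) - ρ t)

/-- The real-valued monotone conjugate (under supercoercivity `ρ⁺` is finite). -/
def mconjR (ρ : ℝ → EReal) (u : ℝ) : ℝ := (mconj ρ u).toReal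

/-- Assumption 3: `ρ⁺` is differentiable on `(0,∞)`. -/
def Assump3 (ρ : ℝ → EReal) : Prop :=
  ∀ u : ℝ, 0 < u → DifferentiableAt ℝ (mconjR ρ) u

/-- Convex subdifferential of an `EReal`-valued function on `ℝ`. -/
def subdiff (f : ℝ → EReal) (x : ℝ) : Set ℝ :=
  {s : ℝ | ∀ y : ℝ, f x + ((s * (y - x) : ℝ) : EReal) ≤ f y}

/-- Indicator function `δ_{ℝ₊}` of `[0,∞)`. -/
def indNonneg : ℝ → EReal := fun t => if 0 ≤ t then (0 : EReal) else ⊤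

/-- Smallest eigenvalue of a symmetric matrix, via the Rayleigh quotient. -/
def lambdaMin {m : Type*} [Fintype m] (A : Matrix m m ℝ) : ℝ :=
  ⨅ x : {x : m → ℝ // x ⬝ᵥ x = 1}, ((x : m → ℝ) ⬝ᵥ A.mulVec (x : m → ℝ))

/-- Euclidean operator norm of a matrix. -/
def opNorm {m : Type*} [Fintype m] (A : Matrix m m ℝ) : ℝ :=
  ⨆ x : {x : m → ℝ // x ⬝ᵥ x = 1}, vnorm (A.mulVec (x : m → ℝ))

/-- The bordered matrix `B(t) = [[t, gᵀ],[g, H]]`. -/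
def Bmat {n : ℕ} (g : Fin n → ℝ) (H : Matrix (Fin n) (Fin n) ℝ) (t : ℝ) :
    Matrix (Fin (n+1)) (Fin (n+1)) ℝ :=
  Matrix.of (Fin.cons (Fin.cons t g) (fun i => Fin.cons (g i) (H i)))

/-- Moore–Penrose pseudoinverse of a real symmetric matrix (via the spectral theorem). -/
def symPinv {n : ℕ} (A : Matrix (Fin n) (Fin n) ℝ) : Matrix (Fin n) (Fin n) ℝ :=
  if h : A.IsHermitian then
    (h.eigenvectorUnitary : Matrix (Fin n) (Fin n) ℝ) *
      Matrix.diagonal (fun i => (h.eigenvalues i)⁻¹) *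
      star (h.eigenvectorUnitary : Matrix (Fin n) (Fin n) ℝ)
  else 0

/-- The set of minimizers of `ρ`. -/
def argminSet (ρ : ℝ → EReal) : Set ℝ := {t : ℝ | ∀ s : ℝ, ρ t ≤ ρ s}

/-- The RW-dual function `k̂(t) = inf_{γ ≥ 0} { ρ(γ−1) + γ λ_min(B(t)) }`. -/
def khat {n : ℕ} (ρ : ℝ → EReal) (g : Fin n → ℝ) (H : Matrix (Fin n) (Fin n) ℝ) (t : ℝ) : EReal :=
  ⨅ γ : {γ : ℝ // 0 ≤ γ},
    (ρ ((γ : ℝ) - 1) + ((((γ : ℝ) * lambdaMin (Bmat g H t)) : ℝ) : EReal))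

/-! ### Auxiliary lemmas -/

lemma rayleigh_Bmat {n : ℕ} (g : Fin n → ℝ) (H : Matrix (Fin n) (Fin n) ℝ) (t : ℝ)
    (x : Fin (n+1) → ℝ) :
    x ⬝ᵥ (Bmat g H t).mulVec x = x ⬝ᵥ (Bmat g H 0).mulVec x + t * (x 0 * x 0) := by
  simp only [Bmat, dotProduct, mulVec, Fin.sum_univ_succ, Matrix.of_apply, Fin.cons_zero,
    Fin.cons_succ, Finset.mul_sum]
  ring_nf

lemma unit_abs_le {m : Type*} [Fintype m] (x : m → ℝ) (hx : x ⬝ᵥ x = 1) (i : m) : |x i| ≤ 1 := by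
  rw [abs_le_one_iff_mul_self_le_one]
  calc x i * x i ≤ ∑ j, x j * x j :=
        Finset.single_le_sum (f := fun j => x j * x j) (fun j _ => mul_self_nonneg _)
          (Finset.mem_univ i)
    _ = 1 := hx

lemma rayleigh_abs_le {m : Type*} [Fintype m] (A : Matrix m m ℝ) (x : m → ℝ)
    (hx : x ⬝ᵥ x = 1) :
    |x ⬝ᵥ A.mulVec x| ≤ ∑ i, ∑ j, |A i j| := by
  calc |x ⬝ᵥ A.mulVec x| ≤ ∑ i, |x i * ∑ j, A i j * x j| :=
        Finset.abs_sum_le_sum_abs _ _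
    _ ≤ ∑ i, ∑ j, |A i j| := by
        refine Finset.sum_le_sum fun i _ => ?_
        rw [abs_mul]
        calc |x i| * |∑ j, A i j * x j| ≤ 1 * ∑ j, |A i j * x j| :=
              mul_le_mul (unit_abs_le x hx i) (Finset.abs_sum_le_sum_abs _ _)
                (abs_nonneg _) zero_le_one
          _ = ∑ j, |A i j| * |x j| := by rw [one_mul]; simp [abs_mul]
          _ ≤ ∑ j, |A i j| * 1 :=
              Finset.sum_le_sum fun j _ =>
                mul_le_mul_of_nonneg_left (unit_abs_le x hx j) (abs_nonneg _)
          _ = ∑ j, |A i j| := by simp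

lemma bddBelow_rayleigh {m : Type*} [Fintype m] (A : Matrix m m ℝ) :
    BddBelow (Set.range fun x : {x : m → ℝ // x ⬝ᵥ x = 1} =>
      (x : m → ℝ) ⬝ᵥ A.mulVec (x : m → ℝ)) := by
  refine ⟨-(∑ i, ∑ j, |A i j|), ?_⟩
  rintro y ⟨x, rfl⟩
  exact neg_le_of_abs_le (rayleigh_abs_le A x x.2)

instance nonempty_unit (n : ℕ) : Nonempty {x : Fin (n+1) → ℝ // x ⬝ᵥ x = 1} := by
  refine ⟨⟨Pi.single 0 1, ?_⟩⟩
  simp [dotProduct, Pi.single_apply]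

lemma lambdaMin_le {m : Type*} [Fintype m] {A : Matrix m m ℝ} (x : m → ℝ) (hx : x ⬝ᵥ x = 1) :
    lambdaMin A ≤ x ⬝ᵥ A.mulVec x :=
  ciInf_le (bddBelow_rayleigh A) ⟨x, hx⟩

lemma le_lambdaMin {m : Type*} [Fintype m] [Nonempty {x : m → ℝ // x ⬝ᵥ x = 1}]
    {A : Matrix m m ℝ} {c : ℝ}
    (h : ∀ x : m → ℝ, x ⬝ᵥ x = 1 → c ≤ x ⬝ᵥ A.mulVec x) : c ≤ lambdaMin A :=
  le_ciInf fun x => h x x.2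

lemma lambdaMin_concave {n : ℕ} (g : Fin n → ℝ) (H : Matrix (Fin n) (Fin n) ℝ)
    {a b θ : ℝ} (hθ : 0 ≤ θ) (hθ1 : θ ≤ 1) :
    θ * lambdaMin (Bmat g H a) + (1 - θ) * lambdaMin (Bmat g H b) ≤
      lambdaMin (Bmat g H (θ * a + (1 - θ) * b)) := by
  apply le_lambdaMin
  intro x hx
  have h₁ := lambdaMin_le (A := Bmat g H a) x hx
  have h₂ := lambdaMin_le (A := Bmat g H b) x hx
  rw [rayleigh_Bmat] at h₁ h₂ ⊢
  have e₁ := mul_le_mul_of_nonneg_left h₁ hθ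
  have e₂ := mul_le_mul_of_nonneg_left h₂ (by linarith : (0:ℝ) ≤ 1 - θ)
  nlinarith [e₁, e₂]

theorem stmt13 {n : ℕ} (g : Fin n → ℝ) (hg : g ≠ 0)
    (H : Matrix (Fin n) (Fin n) ℝ) (hH : H.IsSymm)
    (ρ : ℝ → EReal) (hρ : RhoBasic ρ) (h1 : Assump1 ρ) (h2 : Assump2 ρ) (h3 : Assump3 ρ) :
    (∀ t : ℝ, khat ρ g H t ≠ ⊤ ∧ khat ρ g H t ≠ ⊥) ∧
      ConcaveOn ℝ Set.univ (fun t : ℝ => (khat ρ g H t).toReal) ∧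
      Continuous (fun t : ℝ => (khat ρ g H t).toReal) := by
  obtain ⟨hρ0, hρzero, hlsc, hconvρ⟩ := hρ
  obtain ⟨hmono, hneg, ht₀⟩ := h1
  have hρbot : ∀ s : ℝ, ρ s ≠ ⊥ := fun s h => by
    have := hρ0 s; rw [h] at this; exact absurd this (by simp)
  -- khat is at most 0
  have hle0 : ∀ t : ℝ, khat ρ g H t ≤ 0 := by
    intro t
    have h := iInf_le (fun γ : {γ : ℝ // 0 ≤ γ} =>
      ρ ((γ : ℝ) - 1) + ((((γ : ℝ) * lambdaMin (Bmat g H t)) : ℝ) : EReal))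
      (⟨0, le_refl 0⟩ : {γ : ℝ // 0 ≤ γ})
    simp only at h
    rw [show ((0:ℝ) - 1 : ℝ) = -1 by norm_num, hneg (-1) (by norm_num)] at h
    simpa [khat] using h
  -- khat is bounded below by a real number
  have hlb : ∀ t : ℝ, ∃ C : ℝ, (C : EReal) ≤ khat ρ g H t := by
    intro t
    set L := lambdaMin (Bmat g H t) with hL
    obtain ⟨T, hT⟩ := eventually_atTop.mp (h2 (-L))
    set T' := max T 0 with hT'
    refine ⟨min L (-((T' + 1) * |L|)), le_iInf ?_⟩
    rintro ⟨γ, hγ⟩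
    simp only
    by_cases hcase : T ≤ γ - 1
    · have h₁ : ((-L * (γ - 1) : ℝ) : EReal) ≤ ρ (γ - 1) := hT _ hcase
      have h₂ : (((-L * (γ - 1)) + γ * L : ℝ) : EReal) ≤ ρ (γ - 1) + ((γ * L : ℝ) : EReal) := by
        rw [EReal.coe_add]
        exact add_le_add_left h₁ _
      refine le_trans ?_ h₂
      apply EReal.coe_le_coe_iff.mpr
      have : -L * (γ - 1) + γ * L = L := by ring
      rw [this]
      exact min_le_left _ _
    · have hγub : γ ≤ T' + 1 := by
        have : γ - 1 < T := not_le.mp hcase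
        have : T ≤ T' := le_max_left _ _
        linarith
      have hc : min L (-((T' + 1) * |L|)) ≤ γ * L := by
        have habs : |γ * L| ≤ (T' + 1) * |L| := by
          rw [abs_mul, abs_of_nonneg hγ]
          exact mul_le_mul_of_nonneg_right hγub (abs_nonneg _)
        have := neg_abs_le (γ * L)
        have : -((T' + 1) * |L|) ≤ γ * L := by linarith
        exact le_trans (min_le_right _ _) this
      calc ((min L (-((T' + 1) * |L|)) : ℝ) : EReal) ≤ ((γ * L : ℝ) : EReal) :=
            EReal.coe_le_coe_iff.mpr hc
        _ = 0 + ((γ * L : ℝ) : EReal) := (zero_add _).symm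
        _ ≤ ρ (γ - 1) + ((γ * L : ℝ) : EReal) := add_le_add_left (hρ0 _) _
  have hfin : ∀ t : ℝ, khat ρ g H t ≠ ⊤ ∧ khat ρ g H t ≠ ⊥ := by
    intro t
    constructor
    · exact ne_of_lt (lt_of_le_of_lt (hle0 t) (by norm_num))
    · obtain ⟨C, hC⟩ := hlb t
      intro h
      rw [h, le_bot_iff] at hC
      exact EReal.coe_ne_bot C hC
  set kR : ℝ → ℝ := fun t => (khat ρ g H t).toReal with hkR
  have hcoe : ∀ t : ℝ, ((kR t : ℝ) : EReal) = khat ρ g H t := fun t =>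
    EReal.coe_toReal (hfin t).1 (hfin t).2
  -- concavity
  have hconc : ConcaveOn ℝ Set.univ kR := by
    refine ⟨convex_univ, ?_⟩
    intro x _ y _ a b ha hb hab
    simp only [smul_eq_mul]
    have hb' : b = 1 - a := by linarith
    subst hb'
    have ha1 : a ≤ 1 := by linarith
    have key : ((a * kR x + (1 - a) * kR y : ℝ) : EReal) ≤ khat ρ g H (a * x + (1 - a) * y) := by
      refine le_iInf ?_
      rintro ⟨γ, hγ⟩
      simp only
      by_cases htop : ρ (γ - 1) = ⊤
      · rw [htop, EReal.top_add_coe]; exact le_top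
      · set r := (ρ (γ - 1)).toReal with hr
        have hrc : ρ (γ - 1) = (r : EReal) := (EReal.coe_toReal htop (hρbot _)).symm
        have hkx : kR x ≤ r + γ * lambdaMin (Bmat g H x) := by
          have h := iInf_le (fun γ' : {γ' : ℝ // 0 ≤ γ'} =>
            ρ ((γ' : ℝ) - 1) + ((((γ' : ℝ) * lambdaMin (Bmat g H x)) : ℝ) : EReal))
            (⟨γ, hγ⟩ : {γ' : ℝ // 0 ≤ γ'})
          simp only at h
          rw [hrc, ← EReal.coe_add] at h
          have h' : khat ρ g H x ≤ ((r + γ * lambdaMin (Bmat g H x) : ℝ) : EReal) := h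
          rw [← hcoe x] at h'
          exact EReal.coe_le_coe_iff.mp h'
        have hky : kR y ≤ r + γ * lambdaMin (Bmat g H y) := by
          have h := iInf_le (fun γ' : {γ' : ℝ // 0 ≤ γ'} =>
            ρ ((γ' : ℝ) - 1) + ((((γ' : ℝ) * lambdaMin (Bmat g H y)) : ℝ) : EReal))
            (⟨γ, hγ⟩ : {γ' : ℝ // 0 ≤ γ'})
          simp only at h
          rw [hrc, ← EReal.coe_add] at h
          have h' : khat ρ g H y ≤ ((r + γ * lambdaMin (Bmat g H y) : ℝ) : EReal) := h
          rw [← hcoe y] at h'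
          exact EReal.coe_le_coe_iff.mp h'
        have hlamc := lambdaMin_concave g H (a := x) (b := y) ha ha1
        rw [hrc, ← EReal.coe_add]
        apply EReal.coe_le_coe_iff.mpr
        have e₁ := mul_le_mul_of_nonneg_left hkx ha
        have e₂ := mul_le_mul_of_nonneg_left hky (by linarith : (0:ℝ) ≤ 1 - a)
        have e₃ := mul_le_mul_of_nonneg_left hlamc hγ
        nlinarith [e₁, e₂, e₃]
    have := EReal.toReal_le_toReal key (EReal.coe_ne_bot _) (hfin _).1
    rwa [EReal.toReal_coe] at this
  refine ⟨hfin, hconc, ?_⟩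
  rw [← continuousOn_univ]
  exact hconc.continuousOn isOpen_univ

end
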